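/- arXiv:1807.04199 — 3 statements merged into one kernel-verified Lean document; each statement's English description precedes it below -/
import Mathlib

section
/- Let h:ℝ→ℝ be continuous with primitive H, and g:ℝ→ℝ continuous with |g(u)|≤C(1+|u|) such that L:=lim_{u→+∞} g(u)/u exists. For k≥2 define u_k(t)=k on [1/2,1/2+1/k] and 0 elsewhere, with y_k(t)=∫_0^t u_k. Then lim_{k→∞} ∫_0^1 g(u_k(t)) h(y_k(t)) dt = (1/2) g(0)(h(0)+h(1)) + (H(1)−H(0)) L. -/
open MeasureTheory Filter Set

/-- Control spike of height `k` on `[1/2, 1/2 + 1/k]`. -/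
noncomputable def uSpike (k : ℕ) (t : ℝ) : ℝ :=
  if t ∈ Set.Icc (1 / 2 : ℝ) (1 / 2 + 1 / k) then (k : ℝ) else 0

noncomputable def ySpike (k : ℕ) (t : ℝ) : ℝ := ∫ s in (0:ℝ)..t, uSpike k s

/-!
For `k ≥ 2` the integral is computed exactly. Off the spike `u_k = 0`, while `y_k` is `0` before
it and `1` after it; these pieces give `g 0 * h 0 / 2 + (1/2 - 1/k) * g 0 * h 1`. On the spike
`y_k(t) = k (t - 1/2)`, and the substitution `s = k (t - 1/2)` turns that piece into
`g k / k * (H 1 - H 0)`. It remains to let `k → ∞`, using `g k / k → L`.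
-/

open intervalIntegral

section Spike

variable {k : ℕ} {t : ℝ}

lemma uSpike_of_lt (ht : t < 1 / 2) : uSpike k t = 0 :=
  if_neg fun hmem => ht.not_ge hmem.1

lemma uSpike_of_gt (ht : 1 / 2 + 1 / k < t) : uSpike k t = 0 :=
  if_neg fun hmem => ht.not_ge hmem.2

lemma uSpike_of_mem (ht : t ∈ Icc (1 / 2 : ℝ) (1 / 2 + 1 / k)) : uSpike k t = k :=
  if_pos ht

lemma intervalIntegrable_uSpike (k : ℕ) (a b : ℝ) :
    IntervalIntegrable (uSpike k) volume a b := by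
  have : uSpike k = (Icc (1 / 2 : ℝ) (1 / 2 + 1 / k)).indicator fun _ => (k : ℝ) := by
    funext s; simp [uSpike, indicator]
  rw [this]
  exact ((integrableOn_const measure_Icc_lt_top.ne).integrable_indicator
    measurableSet_Icc).intervalIntegrable

lemma ySpike_of_le (ht : t ≤ 1 / 2) : ySpike k t = 0 := by
  rw [ySpike, integral_congr_uIoo (g := fun _ => 0), intervalIntegral.integral_zero]
  exact fun s hs => uSpike_of_lt (hs.2.trans_le (max_le (by norm_num) ht))

lemma ySpike_of_mem (ht : t ∈ Icc (1 / 2 : ℝ) (1 / 2 + 1 / k)) :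
    ySpike k t = k * (t - 1 / 2) := by
  rw [ySpike, ← integral_add_adjacent_intervals (intervalIntegrable_uSpike k 0 (1 / 2))
    (intervalIntegrable_uSpike k _ t), ← ySpike, ySpike_of_le le_rfl, zero_add,
    integral_congr (g := fun _ => (k : ℝ)), intervalIntegral.integral_const, smul_eq_mul,
    mul_comm]
  intro s hs
  rw [uIcc_of_le ht.1] at hs
  exact uSpike_of_mem ⟨hs.1, hs.2.trans ht.2⟩

lemma ySpike_of_ge (hk : k ≠ 0) (ht : 1 / 2 + 1 / k ≤ t) : ySpike k t = 1 := by
  rw [ySpike, ← integral_add_adjacent_intervals (intervalIntegrable_uSpike k 0 (1 / 2 + 1 / k))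
    (intervalIntegrable_uSpike k _ t), ← ySpike, ySpike_of_mem ⟨by simp, le_rfl⟩,
    integral_congr_Ioo_of_le ht (g := fun _ => 0) fun s hs => uSpike_of_gt hs.1,
    intervalIntegral.integral_zero, add_zero, add_sub_cancel_left,
    mul_one_div_cancel (Nat.cast_ne_zero.2 hk)]

end Spike

lemma integral_comp_mul_sub_of_hasDerivAt {h H : ℝ → ℝ} (hh : Continuous h)
    (hH : ∀ x, HasDerivAt H (h x) x) {c : ℝ} (hc : c ≠ 0) (a b : ℝ) :
    ∫ t in a..b, h (c * (t - a)) = (H (c * (b - a)) - H 0) / c := by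
  simp_rw [mul_sub]
  rw [integral_comp_mul_sub h hc, integral_eq_sub_of_hasDerivAt (fun x _ => hH x)
    (hh.intervalIntegrable _ _), sub_self, smul_eq_mul, inv_mul_eq_div]

theorem integral_spike_eq {h H : ℝ → ℝ} (g : ℝ → ℝ) (hh : Continuous h)
    (hH : ∀ x, HasDerivAt H (h x) x) {k : ℕ} (hk : 2 ≤ k) :
    ∫ t in (0:ℝ)..1, g (uSpike k t) * h (ySpike k t) =
      1 / 2 * g 0 * h 0 + g k / k * (H 1 - H 0) + (1 / 2 - 1 / k) * g 0 * h 1 := by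
  have hk0 : (k : ℝ) ≠ 0 := by positivity
  set b : ℝ := 1 / 2 + 1 / k with hb
  have hb₀ : 1 / 2 ≤ b := by simp [hb]
  have hb₁ : b ≤ 1 := by
    have : (1 : ℝ) / k ≤ 1 / 2 := by gcongr; exact_mod_cast hk
    linarith
  have left : EqOn (fun t => g (uSpike k t) * h (ySpike k t)) (fun _ => g 0 * h 0)
      (uIoo 0 (1 / 2)) := by
    intro t ht
    rw [uIoo_of_le (by norm_num)] at ht
    simp only [uSpike_of_lt ht.2, ySpike_of_le ht.2.le]
  have middle : EqOn (fun t => g (uSpike k t) * h (ySpike k t))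
      (fun t => g k * h (k * (t - 1 / 2))) (uIoo (1 / 2) b) := by
    intro t ht
    rw [uIoo_of_le hb₀] at ht
    simp only [uSpike_of_mem (Ioo_subset_Icc_self ht), ySpike_of_mem (Ioo_subset_Icc_self ht)]
  have right : EqOn (fun t => g (uSpike k t) * h (ySpike k t)) (fun _ => g 0 * h 1)
      (uIoo b 1) := by
    intro t ht
    rw [uIoo_of_le hb₁] at ht
    simp only [uSpike_of_gt ht.1, ySpike_of_ge (by omega) ht.1.le]
  have hmid : Continuous fun t : ℝ => g k * h (k * (t - 1 / 2)) := by fun_prop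
  have i₁ := (intervalIntegrable_congr_uIoo left).2 (intervalIntegrable_const (μ := volume))
  have i₂ := (intervalIntegrable_congr_uIoo middle).2 (hmid.intervalIntegrable (μ := volume) _ _)
  have i₃ := (intervalIntegrable_congr_uIoo right).2 (intervalIntegrable_const (μ := volume))
  rw [← integral_add_adjacent_intervals i₁ (i₂.trans i₃),
    ← integral_add_adjacent_intervals i₂ i₃,
    integral_congr_uIoo left, integral_congr_uIoo middle, integral_congr_uIoo right,
    intervalIntegral.integral_const, intervalIntegral.integral_const,
    intervalIntegral.integral_const_mul, integral_comp_mul_sub_of_hasDerivAt hh hH hk0,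
    show (k : ℝ) * (b - 1 / 2) = 1 by rw [hb, add_sub_cancel_left, mul_one_div_cancel hk0]]
  simp only [hb, smul_eq_mul]
  field_simp
  ring

theorem concentration_discontinuity_limit_general
    (h H g : ℝ → ℝ) (L : ℝ)
    (hh : Continuous h) (hH : ∀ x, HasDerivAt H (h x) x)
    (hL : Tendsto (fun u : ℝ => g u / u) atTop (nhds L)) :
    Tendsto (fun k : ℕ => ∫ t in (0:ℝ)..1, g (uSpike k t) * h (ySpike k t))
      atTop (nhds (1 / 2 * g 0 * (h 0 + h 1) + (H 1 - H 0) * L)) := by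
  have hgk : Tendsto (fun k : ℕ => g k / k) atTop (nhds L) :=
    hL.comp tendsto_natCast_atTop_atTop
  have hlim : Tendsto
      (fun k : ℕ =>
        1 / 2 * g 0 * h 0 + g k / k * (H 1 - H 0) + (1 / 2 - 1 / (k : ℝ)) * g 0 * h 1)
      atTop (nhds (1 / 2 * g 0 * h 0 + L * (H 1 - H 0) + (1 / 2 - 0) * g 0 * h 1)) :=
    ((hgk.mul_const _).const_add _).add
      (((tendsto_one_div_atTop_nhds_zero_nat.const_sub _).mul_const _).mul_const _)
  convert hlim.congr' ((eventually_ge_atTop 2).mono fun k hk => (integral_spike_eq g hh hH hk).symm)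
    using 2
  ring

theorem concentration_discontinuity_limit
    (h H g : ℝ → ℝ) (C L : ℝ) (hC : 0 < C)
    (hh : Continuous h) (hH : ∀ x, HasDerivAt H (h x) x)
    (hg : Continuous g) (hgrow : ∀ u, |g u| ≤ C * (1 + |u|))
    (hL : Tendsto (fun u : ℝ => g u / u) atTop (nhds L)) :
    Tendsto (fun k : ℕ => ∫ t in (0:ℝ)..1, g (uSpike k t) * h (ySpike k t))
      atTop (nhds (1 / 2 * g 0 * (h 0 + h 1) + (H 1 - H 0) * L)) :=
  concentration_discontinuity_limit_general h H g L hh hH hL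
end

section
/- Fix ε∈(0,1). For k≥1 define u_k(t)=√((k(1−ε)+ε)²−ε²) for t∈[0,1/k] and u_k(t)=0 for t>1/k, and let y_k solve ẏ_k=√(ε²+u_k²), y_k(0)=0. Then y_k(t)=(k(1−ε)+ε)t on [0,1/k] and y_k(t)=εt+1−ε on (1/k,1]; in particular y_k(1)=1 and 0≤y_k(t)≤1 for all t, and lim_{k→∞} ∫_0^1 (t+y_k(t)) u_k(t) dt = (1−ε)²/2. -/
open MeasureTheory Filter Set

/-- The concentrating control sequence for the introductory problem with `ε ∈ (0,1)`. -/
noncomputable def uEps (ε : ℝ) (k : ℕ) (t : ℝ) : ℝ :=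
  if t ∈ Set.Icc (0:ℝ) (1 / k) then
    Real.sqrt (((k : ℝ) * (1 - ε) + ε) ^ 2 - ε ^ 2) else 0

/-- The corresponding trajectory, solving `ẏ = √(ε² + u²)`, `y(0) = 0`. -/
noncomputable def yEps (ε : ℝ) (k : ℕ) (t : ℝ) : ℝ :=
  ∫ s in (0:ℝ)..t, Real.sqrt (ε ^ 2 + (uEps ε k s) ^ 2)

/-!
On `[0, 1/k]` the speed `√(ε² + u_k²)` equals `k(1 - ε) + ε`, and it equals `ε` elsewhere, so
`y_k(t) = ε t + k(1 - ε) min(t, 1/k)`, which gives the trajectory formulas and bounds. The cost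
integrand vanishes off `[0, 1/k]`, where it is `(1 + a_k) √(a_k² - ε²) t` with `a_k = k(1 - ε) + ε`;
hence the cost is `(1 + a_k) √(a_k² - ε²) / (2k²)`, a continuous function of `1/k` whose value
at `0` is `(1 - ε)²/2`.
-/

theorem intervalIntegral_indicator_Icc {E : Type*} [NormedAddCommGroup E] [NormedSpace ℝ E]
    (f : ℝ → E) {a b c : ℝ} (hab : a ≤ b) (hac : a ≤ c) :
    ∫ x in a..b, (Icc a c).indicator f x = ∫ x in a..min b c, f x := by
  have hinter : Ioc a b ∩ Icc a c = Ioc a (min b c) := by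
    ext x
    simp only [mem_inter_iff, mem_Ioc, mem_Icc, le_min_iff]
    constructor
    · rintro ⟨⟨hax, hxb⟩, -, hxc⟩
      exact ⟨hax, hxb, hxc⟩
    · rintro ⟨hax, hxb, hxc⟩
      exact ⟨⟨hax, hxb⟩, hax.le, hxc⟩
  rw [intervalIntegral.integral_of_le hab, setIntegral_indicator measurableSet_Icc, hinter,
    intervalIntegral.integral_of_le (le_min hab hac)]

theorem sqrt_sq_add_uEps_sq {ε : ℝ} (hε0 : 0 ≤ ε) (hε1 : ε ≤ 1) (k : ℕ) (s : ℝ) :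
    √(ε ^ 2 + uEps ε k s ^ 2) = ε + (Icc 0 (1 / (k : ℝ))).indicator (fun _ => k * (1 - ε)) s := by
  by_cases hs : s ∈ Icc 0 (1 / (k : ℝ))
  · have hslope : 0 ≤ (k : ℝ) * (1 - ε) := mul_nonneg k.cast_nonneg (sub_nonneg.2 hε1)
    rw [uEps, if_pos hs, indicator_of_mem hs, Real.sq_sqrt (by nlinarith),
      add_sub_cancel, Real.sqrt_sq (by linarith)]
    ring
  · rw [uEps, if_neg hs, indicator_of_notMem hs]
    simp [Real.sqrt_sq hε0]

theorem yEps_eq {ε : ℝ} (hε0 : 0 ≤ ε) (hε1 : ε ≤ 1) (k : ℕ) {t : ℝ} (ht : 0 ≤ t) :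
    yEps ε k t = ε * t + k * (1 - ε) * min t (1 / k) := by
  have hind : IntervalIntegrable
      ((Icc 0 (1 / (k : ℝ))).indicator fun _ => (k : ℝ) * (1 - ε)) volume 0 t :=
    intervalIntegrable_iff.2
      ((intervalIntegrable_iff.1 intervalIntegrable_const).indicator measurableSet_Icc)
  simp_rw [yEps, sqrt_sq_add_uEps_sq hε0 hε1]
  rw [intervalIntegral.integral_add intervalIntegrable_const hind,
    intervalIntegral_indicator_Icc _ ht (by positivity)]
  simp only [intervalIntegral.integral_const, smul_eq_mul, sub_zero]
  ring

theorem yEps_of_mem_Icc {ε : ℝ} (hε0 : 0 ≤ ε) (hε1 : ε ≤ 1) (k : ℕ) {t : ℝ}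
    (ht : t ∈ Icc 0 (1 / (k : ℝ))) : yEps ε k t = (k * (1 - ε) + ε) * t := by
  rw [yEps_eq hε0 hε1 k ht.1, min_eq_left ht.2]
  ring

theorem yEps_of_lt {ε : ℝ} (hε0 : 0 ≤ ε) (hε1 : ε ≤ 1) {k : ℕ} (hk : k ≠ 0) {t : ℝ}
    (ht : 1 / (k : ℝ) < t) : yEps ε k t = ε * t + 1 - ε := by
  rw [yEps_eq hε0 hε1 k ((one_div_nonneg.2 k.cast_nonneg).trans ht.le), min_eq_right ht.le]
  field_simp
  ring

theorem yEps_one {ε : ℝ} (hε0 : 0 ≤ ε) (hε1 : ε ≤ 1) {k : ℕ} (hk : k ≠ 0) : yEps ε k 1 = 1 := by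
  have hk1 : (1 : ℝ) ≤ k := by exact_mod_cast Nat.one_le_iff_ne_zero.2 hk
  rw [yEps_eq hε0 hε1 k zero_le_one, min_eq_right (div_le_self zero_le_one hk1)]
  field_simp
  ring

theorem yEps_mem_Icc {ε : ℝ} (hε0 : 0 ≤ ε) (hε1 : ε ≤ 1) {k : ℕ} (hk : k ≠ 0) {t : ℝ}
    (ht : t ∈ Icc (0 : ℝ) 1) : yEps ε k t ∈ Icc (0 : ℝ) 1 := by
  have hk0 : (0 : ℝ) < k := by positivity
  have hmin : (k : ℝ) * min t (1 / k) ≤ 1 :=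
    (mul_le_mul_of_nonneg_left (min_le_right _ _) hk0.le).trans_eq (by field_simp)
  have hmin0 : 0 ≤ min t (1 / (k : ℝ)) := le_min ht.1 (by positivity)
  rw [yEps_eq hε0 hε1 k ht.1]
  constructor
  · have := mul_nonneg (mul_nonneg hk0.le (sub_nonneg.2 hε1)) hmin0
    nlinarith [mul_nonneg hε0 ht.1]
  · nlinarith [mul_le_mul_of_nonneg_left ht.2 hε0, mul_le_mul_of_nonneg_right hmin (sub_nonneg.2 hε1)]

theorem integral_cost_uEps {ε : ℝ} (hε0 : 0 ≤ ε) (hε1 : ε ≤ 1) {k : ℕ} (hk : k ≠ 0) :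
    ∫ t in (0 : ℝ)..1, (t + yEps ε k t) * uEps ε k t =
      (1 + (k * (1 - ε) + ε)) * √((k * (1 - ε) + ε) ^ 2 - ε ^ 2) / (2 * k ^ 2) := by
  have hk1 : (1 : ℝ) ≤ k := by exact_mod_cast Nat.one_le_iff_ne_zero.2 hk
  have hcost : (fun t => (t + yEps ε k t) * uEps ε k t) = (Icc 0 (1 / (k : ℝ))).indicator
      fun t => (1 + (k * (1 - ε) + ε)) * √((k * (1 - ε) + ε) ^ 2 - ε ^ 2) * t := by
    funext t
    by_cases ht : t ∈ Icc 0 (1 / (k : ℝ))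
    · rw [indicator_of_mem ht, yEps_of_mem_Icc hε0 hε1 k ht, uEps, if_pos ht]
      ring
    · rw [indicator_of_notMem ht, uEps, if_neg ht, mul_zero]
  rw [hcost, intervalIntegral_indicator_Icc _ zero_le_one (by positivity),
    min_eq_right (div_le_self zero_le_one hk1), intervalIntegral.integral_const_mul, integral_id]
  field_simp
  ring

theorem tendsto_cost_uEps {ε : ℝ} (hε1 : ε ≤ 1) :
    Tendsto (fun k : ℕ => (1 + (k * (1 - ε) + ε)) * √((k * (1 - ε) + ε) ^ 2 - ε ^ 2) / (2 * k ^ 2))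
      atTop (nhds ((1 - ε) ^ 2 / 2)) := by
  set g : ℝ → ℝ := fun x => (x + (1 - ε) + ε * x) * √(((1 - ε) + ε * x) ^ 2 - (ε * x) ^ 2) / 2
  have hg0 : g 0 = (1 - ε) ^ 2 / 2 := by
    simp only [g, mul_zero, add_zero, zero_add, ne_eq, OfNat.ofNat_ne_zero, not_false_eq_true,
      zero_pow, sub_zero, Real.sqrt_sq (sub_nonneg.2 hε1)]
    ring
  have hg : Tendsto (fun k : ℕ => g (k : ℝ)⁻¹) atTop (nhds ((1 - ε) ^ 2 / 2)) :=
    hg0 ▸ ((by fun_prop : Continuous g).tendsto 0).comp tendsto_inv_atTop_nhds_zero_nat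
  refine hg.congr' ?_
  filter_upwards [eventually_ne_atTop 0] with k hk
  -- `√(a² - ε²) / k = √((a/k)² - (ε/k)²)` with `a/k = (1 - ε) + ε/k`
  have hrad : ((1 - ε) + ε * (k : ℝ)⁻¹) ^ 2 - (ε * (k : ℝ)⁻¹) ^ 2 =
      ((k * (1 - ε) + ε) ^ 2 - ε ^ 2) * (k : ℝ)⁻¹ ^ 2 := by
    field_simp
  simp only [g]
  rw [hrad, Real.sqrt_mul' _ (sq_nonneg _), Real.sqrt_sq (inv_nonneg.2 k.cast_nonneg)]
  field_simp
  ring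

theorem intro_problem_minimizing_sequence
    (ε : ℝ) (hε : ε ∈ Set.Ioo (0:ℝ) 1) :
    (∀ k : ℕ, 1 ≤ k →
      (∀ t ∈ Set.Icc (0:ℝ) (1 / k), yEps ε k t = ((k : ℝ) * (1 - ε) + ε) * t) ∧
      (∀ t ∈ Set.Ioc (1 / (k:ℝ)) 1, yEps ε k t = ε * t + 1 - ε) ∧
      yEps ε k 1 = 1 ∧
      (∀ t ∈ Set.Icc (0:ℝ) 1, 0 ≤ yEps ε k t ∧ yEps ε k t ≤ 1)) ∧
    Tendsto (fun k : ℕ => ∫ t in (0:ℝ)..1, (t + yEps ε k t) * uEps ε k t)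
      atTop (nhds ((1 - ε) ^ 2 / 2)) := by
  obtain ⟨hε0, hε1⟩ := hε
  refine ⟨fun k hk => ?_, ?_⟩
  · have hk0 : k ≠ 0 := Nat.one_le_iff_ne_zero.1 hk
    exact ⟨fun t ht => yEps_of_mem_Icc hε0.le hε1.le k ht,
      fun t ht => yEps_of_lt hε0.le hε1.le hk0 ht.1, yEps_one hε0.le hε1.le hk0,
      fun t ht => yEps_mem_Icc hε0.le hε1.le hk0 ht⟩
  · refine (tendsto_cost_uEps hε1.le).congr' ?_
    filter_upwards [eventually_ne_atTop 0] with k hk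
    rw [integral_cost_uEps hε0.le hε1.le hk]
end

section
/- Fix ε∈(0,1). The infimum of ∫_0^1 (t+y(t))u(t)dt over nonnegative u∈L^1([0,1]) and y solving ẏ=√(ε²+u²), y(0)=0, y(1)=1, 0≤y≤1, is equal to (1−ε)²/2. -/
/-!
Put `w = √(ε² + u²) - ε` and `z(t) = ∫₀ᵗ w = y(t) - ε t`. Then `0 ≤ w ≤ u` and `0 ≤ z ≤ t + y`,
so the cost is at least `∫₀¹ z ż = z(1)² / 2 = (1 - ε)² / 2`, the middle equality being the chain
rule for the absolutely continuous function `z`. Conversely, the control equal to a constant on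
`[0, a]` and to `0` afterwards, with the constant tuned so that `y(1) = 1`, has cost
`spikeCost ε a`, which tends to `(1 - ε)² / 2` as `a → 0⁺`.
-/

open MeasureTheory Set

/-- Achievable costs for the introductory problem with parameter `ε`:
nonnegative integrable controls `u`, trajectory `y(t) = ∫_0^t √(ε² + u(s)²)`
with `y(1) = 1` and `0 ≤ y(t) ≤ 1` on `[0,1]`. -/
def epsCosts (ε : ℝ) : Set ℝ :=
  {c : ℝ | ∃ u : ℝ → ℝ, (∀ t, 0 ≤ u t) ∧ IntervalIntegrable u volume 0 1 ∧
    (∫ s in (0:ℝ)..1, Real.sqrt (ε ^ 2 + (u s) ^ 2)) = 1 ∧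
    (∀ t ∈ Set.Icc (0:ℝ) 1,
      (0:ℝ) ≤ (∫ s in (0:ℝ)..t, Real.sqrt (ε ^ 2 + (u s) ^ 2)) ∧
      (∫ s in (0:ℝ)..t, Real.sqrt (ε ^ 2 + (u s) ^ 2)) ≤ 1) ∧
    c = ∫ t in (0:ℝ)..1, (t + ∫ s in (0:ℝ)..t, Real.sqrt (ε ^ 2 + (u s) ^ 2)) * u t}

open Filter Topology

theorem intervalIntegral.integral_primitive_mul_eq_sq_div_two {g : ℝ → ℝ} {a b : ℝ}
    (hg : IntervalIntegrable g volume a b) :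
    ∫ t in a..b, (∫ s in a..t, g s) * g t = (∫ s in a..b, g s) ^ 2 / 2 := by
  set G : ℝ → ℝ := fun x => ∫ s in a..x, g s
  have hG : AbsolutelyContinuousOnInterval G a b :=
    hg.absolutelyContinuousOnInterval_intervalIntegral left_mem_uIcc
  have hderiv : ∀ᵐ x, x ∈ uIoc a b → deriv G x * G x + G x * deriv G x = 2 * (G x * g x) := by
    filter_upwards [hg.ae_hasDerivAt_integral] with x hx hxab
    rw [(hx (uIoc_subset_uIcc hxab) a left_mem_uIcc).deriv]
    ring
  calc ∫ t in a..b, G t * g t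
      = (∫ x in a..b, deriv G x * G x + G x * deriv G x) / 2 := by
        rw [intervalIntegral.integral_congr_ae hderiv, intervalIntegral.integral_const_mul]
        ring
    _ = (G b ^ 2 - G a ^ 2) / 2 := by rw [hG.integral_deriv_mul_eq_sub hG]; ring
    _ = G b ^ 2 / 2 := by simp [G]

lemma Real.le_sqrt_sq_add_sq (x y : ℝ) : x ≤ √(x ^ 2 + y ^ 2) :=
  Real.le_sqrt_of_sq_le (le_add_of_nonneg_right (sq_nonneg y))

lemma Real.sqrt_sq_add_sq_le_add {x y : ℝ} (hx : 0 ≤ x) (hy : 0 ≤ y) : √(x ^ 2 + y ^ 2) ≤ x + y :=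
  Real.sqrt_le_iff.mpr ⟨add_nonneg hx hy, by nlinarith⟩

theorem sq_div_two_le_of_mem_epsCosts {ε c : ℝ} (hε : 0 ≤ ε) (hc : c ∈ epsCosts ε) :
    (1 - ε) ^ 2 / 2 ≤ c := by
  obtain ⟨u, hu0, hu, hy1, -, rfl⟩ := hc
  set f : ℝ → ℝ := fun s => √(ε ^ 2 + u s ^ 2)
  set w : ℝ → ℝ := fun s => f s - ε
  have hw0 : ∀ s, 0 ≤ w s := fun s => sub_nonneg.mpr (Real.le_sqrt_sq_add_sq ε (u s))
  have hwu : ∀ s, w s ≤ u s :=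
    fun s => sub_le_iff_le_add'.mpr (Real.sqrt_sq_add_sq_le_add hε (hu0 s))
  have hw : IntervalIntegrable w volume 0 1 := by
    refine hu.mono_fun' ?_ (Filter.Eventually.of_forall fun s => ?_)
    · exact (by fun_prop : Continuous fun x : ℝ => √(ε ^ 2 + x ^ 2) - ε).comp_aestronglyMeasurable
        hu.def'.1
    · simpa [Real.norm_of_nonneg (hw0 s)] using hwu s
  have hf : IntervalIntegrable f volume 0 1 := by
    simpa [w] using hw.add (intervalIntegrable_const (c := ε))
  have hy : ∀ t ∈ Icc (0:ℝ) 1, ∫ s in (0:ℝ)..t, f s = (∫ s in (0:ℝ)..t, w s) + ε * t := by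
    intro t ht
    have hft : IntervalIntegrable f volume 0 t :=
      hf.mono_set (uIcc_subset_uIcc_left (by rwa [uIcc_of_le zero_le_one]))
    rw [intervalIntegral.integral_sub hft intervalIntegrable_const]
    simp only [intervalIntegral.integral_const, smul_eq_mul, sub_zero]
    ring
  have hz1 : ∫ s in (0:ℝ)..1, w s = 1 - ε := by
    linarith [hy 1 (right_mem_Icc.mpr zero_le_one)]
  calc (1 - ε) ^ 2 / 2 = ∫ t in (0:ℝ)..1, (∫ s in (0:ℝ)..t, w s) * w t := by
        rw [intervalIntegral.integral_primitive_mul_eq_sq_div_two hw, hz1]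
    _ ≤ ∫ t in (0:ℝ)..1, (t + ∫ s in (0:ℝ)..t, f s) * u t := by
      refine intervalIntegral.integral_mono_on zero_le_one
        (hw.continuousOn_mul (intervalIntegral.continuousOn_primitive_interval' hw left_mem_uIcc))
        (hu.continuousOn_mul (continuousOn_id.add
          (intervalIntegral.continuousOn_primitive_interval' hf left_mem_uIcc))) fun t ht => ?_
      have hz0 : 0 ≤ ∫ s in (0:ℝ)..t, w s := intervalIntegral.integral_nonneg ht.1 fun s _ => hw0 s
      rw [hy t ht]
      exact mul_le_mul (by nlinarith [ht.1]) (hwu t) (hw0 t) (by nlinarith [ht.1])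

section StepFunction

variable {a p q x y : ℝ}

lemma antitone_ite_le (h : q ≤ p) : Antitone fun t : ℝ => if t ≤ a then p else q := by
  intro s t hst
  dsimp only
  split_ifs <;> linarith

lemma integral_ite_le_of_le (hx : x ≤ a) (hy : y ≤ a) :
    ∫ t in x..y, (if t ≤ a then p else q) = (y - x) * p := by
  rw [intervalIntegral.integral_congr (g := fun _ => p)
    fun t ht => if_pos (ht.2.trans (max_le hx hy))]
  simp

lemma integral_ite_le_of_ge (hx : a ≤ x) (hy : a ≤ y) :
    ∫ t in x..y, (if t ≤ a then p else q) = (y - x) * q := by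
  rw [intervalIntegral.integral_congr_ae (g := fun _ => q) (Eventually.of_forall
    fun t ht => if_neg (not_le.mpr ((le_min hx hy).trans_lt ht.1)))]
  simp

end StepFunction

theorem spike_mem_epsCosts {ε c a : ℝ} (hε : 0 ≤ ε) (hc : 0 ≤ c) (ha : 0 ≤ a) (ha1 : a ≤ 1)
    (hend : √(ε ^ 2 + c ^ 2) * a + ε * (1 - a) = 1) :
    (1 + √(ε ^ 2 + c ^ 2)) * c * a ^ 2 / 2 ∈ epsCosts ε := by
  set m := √(ε ^ 2 + c ^ 2)
  set u : ℝ → ℝ := fun t => if t ≤ a then c else 0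
  have hm : ε ≤ m := Real.le_sqrt_sq_add_sq ε c
  have hf : ∀ t, √(ε ^ 2 + u t ^ 2) = if t ≤ a then m else ε := by
    intro t
    split_ifs with h <;> simp [u, h, m, Real.sqrt_sq hε]
  have hf_int : ∀ x y, IntervalIntegrable (fun t : ℝ => if t ≤ a then m else ε) volume x y :=
    fun x y => (antitone_ite_le hm).intervalIntegrable
  have hf0 : ∀ t, 0 ≤ if t ≤ a then m else ε := fun t => by split_ifs <;> linarith
  have hy : ∀ t ∈ Icc 0 a, ∫ s in (0:ℝ)..t, (if s ≤ a then m else ε) = m * t := by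
    intro t ht
    rw [integral_ite_le_of_le ha ht.2]
    ring
  have hy1 : ∫ s in (0:ℝ)..1, (if s ≤ a then m else ε) = 1 := by
    rw [← intervalIntegral.integral_add_adjacent_intervals (hf_int 0 a) (hf_int a 1),
      integral_ite_le_of_le ha le_rfl, integral_ite_le_of_ge le_rfl ha1]
    linarith [hend]
  have hu_int : ∀ x y, IntervalIntegrable u volume x y :=
    fun x y => (antitone_ite_le hc).intervalIntegrable
  have hcost_int : ∀ x y, IntervalIntegrable
      (fun t => (t + ∫ s in (0:ℝ)..t, (if s ≤ a then m else ε)) * u t) volume x y :=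
    fun x y => (hu_int x y).continuousOn_mul
      (continuous_id.add (intervalIntegral.continuous_primitive hf_int 0)).continuousOn
  refine ⟨u, fun t => ?_, hu_int 0 1, ?_, fun t ht => ?_, ?_⟩
  · dsimp only [u]; split_ifs <;> simp [hc]
  · simpa only [hf] using hy1
  · simp only [hf]
    exact ⟨intervalIntegral.integral_nonneg ht.1 fun s _ => hf0 s,
      hy1 ▸ intervalIntegral.integral_mono_interval le_rfl ht.1 ht.2
        (Eventually.of_forall hf0) (hf_int 0 1)⟩
  · simp only [hf]
    rw [← intervalIntegral.integral_add_adjacent_intervals (hcost_int 0 a) (hcost_int a 1)]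
    have hleft : ∫ t in (0:ℝ)..a, (t + ∫ s in (0:ℝ)..t, (if s ≤ a then m else ε)) * u t
        = ∫ t in (0:ℝ)..a, (1 + m) * c * t := by
      refine intervalIntegral.integral_congr fun t ht => ?_
      rw [uIcc_of_le ha] at ht
      simp only [hy t ht, u, if_pos ht.2]
      ring
    have hright : ∫ t in a..1, (t + ∫ s in (0:ℝ)..t, (if s ≤ a then m else ε)) * u t = 0 := by
      rw [intervalIntegral.integral_congr_ae (g := fun _ => 0) (Eventually.of_forall
        fun t ht => ?_)]
      · simp
      · rw [uIoc_of_le ha1] at ht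
        simp [u, not_le.mpr ht.1]
    rw [hleft, hright, intervalIntegral.integral_const_mul, integral_id]
    ring

/-- With the control `c` on `[0, a]`, the slope `m = √(ε² + c²)` of `y` there satisfies
`m a = 1 - ε + ε a` (from `y(1) = 1`), so `c a = √((m a)² - (ε a)²)`, and the cost is
`(1 + m) c a² / 2`. -/
noncomputable def spikeCost (ε a : ℝ) : ℝ :=
  (a + (1 - ε + ε * a)) * √((1 - ε + ε * a) ^ 2 - (ε * a) ^ 2) / 2

theorem spikeCost_mem_epsCosts {ε a : ℝ} (hε0 : 0 ≤ ε) (hε1 : ε ≤ 1) (ha : 0 < a)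
    (ha1 : a ≤ 1) :
    spikeCost ε a ∈ epsCosts ε := by
  set b := 1 - ε + ε * a
  have hb : ε * a ≤ b := by simp only [b]; linarith
  set c := √(b ^ 2 - (ε * a) ^ 2) / a
  have hm : √(ε ^ 2 + c ^ 2) = b / a := by
    rw [← Real.sqrt_sq (div_nonneg ((mul_nonneg hε0 ha.le).trans hb) ha.le)]
    congr 1
    rw [div_pow, Real.sq_sqrt (by nlinarith [mul_nonneg hε0 ha.le])]
    field_simp
    ring
  have hmem :=
    spike_mem_epsCosts (c := c) hε0 (by positivity) ha.le ha1 (by rw [hm]; field_simp; ring)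
  rw [hm] at hmem
  convert hmem using 1
  simp only [spikeCost, c, b]
  field_simp

theorem tendsto_spikeCost_nhdsGT_zero {ε : ℝ} (hε : ε ≤ 1) :
    Tendsto (spikeCost ε) (𝓝[>] 0) (𝓝 ((1 - ε) ^ 2 / 2)) := by
  have h0 : spikeCost ε 0 = (1 - ε) ^ 2 / 2 := by
    simp [spikeCost, Real.sqrt_sq (sub_nonneg.mpr hε)]
    ring
  rw [← h0]
  exact ((by unfold spikeCost; fun_prop : Continuous (spikeCost ε)).tendsto 0).mono_left
    nhdsWithin_le_nhds

theorem intro_problem_value (ε : ℝ) (hε : ε ∈ Set.Ioo (0:ℝ) 1) :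
    sInf (epsCosts ε) = (1 - ε) ^ 2 / 2 := by
  obtain ⟨hε0, hε1⟩ := hε
  have hlower : ∀ c ∈ epsCosts ε, (1 - ε) ^ 2 / 2 ≤ c :=
    fun c hc => sq_div_two_le_of_mem_epsCosts hε0.le hc
  have hspike : ∀ a ∈ Ioc (0:ℝ) 1, spikeCost ε a ∈ epsCosts ε :=
    fun a ha => spikeCost_mem_epsCosts hε0.le hε1.le ha.1 ha.2
  refine le_antisymm ?_ (le_csInf ⟨_, hspike 1 (right_mem_Ioc.mpr one_pos)⟩ hlower)
  refine ge_of_tendsto (tendsto_spikeCost_nhdsGT_zero hε1.le) ?_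
  filter_upwards [Ioc_mem_nhdsGT zero_lt_one] with a ha
  exact csInf_le ⟨_, hlower⟩ (hspike a ha)
end
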